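/- Let f = (f11, f12, f22) ∈ C²_c(S²; D1). Then for every x ∈ ℝ²: −D_u D_v (L¹ f)(x) = 2 (u1² f11(x) + u2² f22(x)) + (D_u + D_v)(L⁰ f)(x), where L⁰ f = Lf is the longitudinal V-line transform and L¹ f its first moment. -/

import Mathlib

noncomputable section

open MeasureTheory

/-- The divergent beam transform `X_w h (x) = ∫₀^∞ h(x + t w) dt`. -/
def Xbeam (w : ℝ × ℝ) (h : ℝ × ℝ → ℝ) (x : ℝ × ℝ) : ℝ :=
  ∫ t in Set.Ioi (0 : ℝ), h (x + t • w)

/-- The k-th moment divergent beam transform `X_w^k h (x) = ∫₀^∞ t^k h(x + t w) dt`. -/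
def Xmom (k : ℕ) (w : ℝ × ℝ) (h : ℝ × ℝ → ℝ) (x : ℝ × ℝ) : ℝ :=
  ∫ t in Set.Ioi (0 : ℝ), t ^ k * h (x + t • w)

/-- The directional derivative `D_w h = w ⋅ ∇h`. -/
def Dir (w : ℝ × ℝ) (h : ℝ × ℝ → ℝ) (x : ℝ × ℝ) : ℝ :=
  fderiv ℝ h x w

/-- Support contained in the open unit disc `D1`. -/
def SuppInDisc (h : ℝ × ℝ → ℝ) : Prop :=
  ∀ x : ℝ × ℝ, 1 ≤ x.1 ^ 2 + x.2 ^ 2 → h x = 0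

/-- The longitudinal V-line transform. -/
def VlineL (u1 u2 : ℝ) (f11 f12 f22 : ℝ × ℝ → ℝ) : ℝ × ℝ → ℝ :=
  Xbeam (u1, u2) (fun y => u1 ^ 2 * f11 y + 2 * u1 * u2 * f12 y + u2 ^ 2 * f22 y)
    + Xbeam (-u1, u2) (fun y => u1 ^ 2 * f11 y - 2 * u1 * u2 * f12 y + u2 ^ 2 * f22 y)

/-- The transverse V-line transform. -/
def VlineT (u1 u2 : ℝ) (f11 f12 f22 : ℝ × ℝ → ℝ) : ℝ × ℝ → ℝ :=
  Xbeam (u1, u2) (fun y => u2 ^ 2 * f11 y - 2 * u1 * u2 * f12 y + u1 ^ 2 * f22 y)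
    + Xbeam (-u1, u2) (fun y => u2 ^ 2 * f11 y + 2 * u1 * u2 * f12 y + u1 ^ 2 * f22 y)

/-- The mixed V-line transform. -/
def VlineM (u1 u2 : ℝ) (f11 f12 f22 : ℝ × ℝ → ℝ) : ℝ × ℝ → ℝ :=
  Xbeam (u1, u2) (fun y => -(u1 * u2) * f11 y + (u1 ^ 2 - u2 ^ 2) * f12 y + u1 * u2 * f22 y)
    + Xbeam (-u1, u2) (fun y => u1 * u2 * f11 y + (u1 ^ 2 - u2 ^ 2) * f12 y - u1 * u2 * f22 y)

/-- The k-th moment longitudinal V-line transform. -/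
def VlineLk (k : ℕ) (u1 u2 : ℝ) (f11 f12 f22 : ℝ × ℝ → ℝ) : ℝ × ℝ → ℝ :=
  Xmom k (u1, u2) (fun y => u1 ^ 2 * f11 y + 2 * u1 * u2 * f12 y + u2 ^ 2 * f22 y)
    + Xmom k (-u1, u2) (fun y => u1 ^ 2 * f11 y - 2 * u1 * u2 * f12 y + u2 ^ 2 * f22 y)

/-- The k-th moment transverse V-line transform. -/
def VlineTk (k : ℕ) (u1 u2 : ℝ) (f11 f12 f22 : ℝ × ℝ → ℝ) : ℝ × ℝ → ℝ :=
  Xmom k (u1, u2) (fun y => u2 ^ 2 * f11 y - 2 * u1 * u2 * f12 y + u1 ^ 2 * f22 y)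
    + Xmom k (-u1, u2) (fun y => u2 ^ 2 * f11 y + 2 * u1 * u2 * f12 y + u1 ^ 2 * f22 y)

/-- The k-th moment mixed V-line transform. -/
def VlineMk (k : ℕ) (u1 u2 : ℝ) (f11 f12 f22 : ℝ × ℝ → ℝ) : ℝ × ℝ → ℝ :=
  Xmom k (u1, u2) (fun y => -(u1 * u2) * f11 y + (u1 ^ 2 - u2 ^ 2) * f12 y + u1 * u2 * f22 y)
    + Xmom k (-u1, u2) (fun y => u1 * u2 * f11 y + (u1 ^ 2 - u2 ^ 2) * f12 y - u1 * u2 * f22 y)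

/-! Both beam transforms commute with directional derivatives (differentiate under the integral;
the integrands are compactly supported along every ray), and along its own direction the
fundamental theorem of calculus gives `X_w⁰ (D_w h) = -h` and `X_w¹ (D_w h) = -X_w⁰ h`. Writing
`Lᵏ f = X_uᵏ a + X_vᵏ b`, this yields `D_u D_v L¹ f = -X_u⁰ (D_v a) - X_v⁰ (D_u b)`,
`D_u L⁰ f = -a + X_v⁰ (D_u b)` and `D_v L⁰ f = X_u⁰ (D_v a) - b`, and `a + b = 2 (u1² f11 + u2² f22)`. -/

open Set Metric Filter

section Ray

variable {F E : Type*} [NormedAddCommGroup F] [NormedSpace ℝ F] [NormedAddCommGroup E]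
  {g : F → E} {w : F}

lemma HasCompactSupport.exists_apply_add_smul_eq_zero (hg : HasCompactSupport g) (hw : w ≠ 0)
    (r : ℝ) : ∃ T, ∀ (x : F) (t : ℝ), ‖x‖ ≤ r → T < |t| → g (x + t • w) = 0 := by
  obtain ⟨R, hR⟩ := hg.isCompact.isBounded.subset_closedBall 0
  refine ⟨(R + r) / ‖w‖, fun x t hx ht => image_eq_zero_of_notMem_tsupport fun hmem => ?_⟩
  have hfar : R + r < ‖t • w‖ := by
    rwa [norm_smul, Real.norm_eq_abs, ← div_lt_iff₀ (norm_pos_iff.2 hw)]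
  have hnear : ‖x + t • w‖ ≤ R := by simpa using hR hmem
  have htri := norm_sub_le (x + t • w) x
  rw [add_sub_cancel_left] at htri
  linarith

lemma HasCompactSupport.comp_add_smul (hg : HasCompactSupport g) (hw : w ≠ 0) (x : F) :
    HasCompactSupport fun t : ℝ => g (x + t • w) := by
  obtain ⟨T, hT⟩ := hg.exists_apply_add_smul_eq_zero hw ‖x‖
  refine HasCompactSupport.intro (isCompact_closedBall (0 : ℝ) T) fun t ht => hT x t le_rfl ?_
  simpa using ht

lemma Continuous.integrable_pow_smul_apply_add_smul [NormedSpace ℝ E] (hgc : Continuous g)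
    (hg : HasCompactSupport g) (hw : w ≠ 0) (k : ℕ) (x : F) :
    Integrable fun t : ℝ => t ^ k • g (x + t • w) :=
  (by fun_prop : Continuous fun t : ℝ => t ^ k • g (x + t • w)).integrable_of_hasCompactSupport
    (hg.comp_add_smul hw x).smul_left

end Ray

lemma SuppInDisc.hasCompactSupport {h : ℝ × ℝ → ℝ} (hs : SuppInDisc h) : HasCompactSupport h := by
  refine HasCompactSupport.intro (isCompact_closedBall (0 : ℝ × ℝ) 1) fun y hy => hs y ?_
  rw [mem_closedBall, dist_zero_right, not_le, Prod.norm_def, Real.norm_eq_abs,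
    Real.norm_eq_abs] at hy
  rcases lt_max_iff.1 hy with hy | hy <;> nlinarith [sq_abs y.1, sq_abs y.2, abs_nonneg y.1, abs_nonneg y.2]

section Beam

variable {h : ℝ × ℝ → ℝ} {w : ℝ × ℝ}

lemma hasDerivAt_apply_add_smul (hh : Differentiable ℝ h) (x : ℝ × ℝ) (t : ℝ) :
    HasDerivAt (fun t : ℝ => h (x + t • w)) (Dir w h (x + t • w)) t := by
  have hline : HasDerivAt (fun t : ℝ => x + t • w) w t := by
    simpa using ((hasDerivAt_id t).smul_const w).const_add x
  exact (hh _).hasFDerivAt.comp_hasDerivAt t hline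

lemma hasFDerivAt_Xmom (hC : ContDiff ℝ 1 h) (hh : HasCompactSupport h) (hw : w ≠ 0) (k : ℕ)
    (x₀ : ℝ × ℝ) :
    HasFDerivAt (Xmom k w h) (∫ t in Ioi (0 : ℝ), t ^ k • fderiv ℝ h (x₀ + t • w)) x₀ := by
  have hcont := hC.continuous
  have hcont' := hC.continuous_fderiv one_ne_zero
  obtain ⟨C, hCb⟩ := hcont'.bounded_above_of_compact_support (hh.fderiv ℝ)
  obtain ⟨T, hT⟩ := (hh.fderiv ℝ).exists_apply_add_smul_eq_zero hw (‖x₀‖ + 1)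
  refine hasFDerivAt_integral_of_dominated_of_fderiv_le (ball_mem_nhds x₀ one_pos)
    (F := fun x t => t ^ k * h (x + t • w)) (F' := fun x t => t ^ k • fderiv ℝ h (x + t • w))
    (bound := (closedBall 0 T).indicator fun t => |t| ^ k * C) ?_
    (hcont.integrable_pow_smul_apply_add_smul hh hw k x₀).restrict
    (by fun_prop : Continuous fun t : ℝ => t ^ k • fderiv ℝ h (x₀ + t • w)).aestronglyMeasurable
    (Eventually.of_forall fun t x hx => ?_) ?_ (Eventually.of_forall fun t x _ => ?_)
  · exact Eventually.of_forall fun x =>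
      (by fun_prop : Continuous fun t : ℝ => t ^ k * h (x + t • w)).aestronglyMeasurable
  · by_cases ht : t ∈ closedBall 0 T
    · rw [indicator_of_mem ht, norm_smul, norm_pow, Real.norm_eq_abs]
      gcongr
      exact hCb _
    · have hx' : ‖x‖ ≤ ‖x₀‖ + 1 := by
        have := norm_le_norm_add_norm_sub' x x₀
        rw [mem_ball, dist_eq_norm] at hx
        linarith
      rw [indicator_of_notMem ht, hT x t hx' (by simpa using ht), smul_zero, norm_zero]
  · exact ((ContinuousOn.integrableOn_compact (isCompact_closedBall 0 T)
      (by fun_prop)).integrable_indicator measurableSet_closedBall).restrict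
  · have hshift : HasFDerivAt (fun x => h (x + t • w)) (fderiv ℝ h (x + t • w)) x :=
      (hasFDerivAt_comp_add_right _).2 ((hC.differentiable one_ne_zero) _).hasFDerivAt
    exact hshift.const_mul (t ^ k)

lemma differentiable_Xmom (hC : ContDiff ℝ 1 h) (hh : HasCompactSupport h) (hw : w ≠ 0) (k : ℕ) :
    Differentiable ℝ (Xmom k w h) :=
  fun x => (hasFDerivAt_Xmom hC hh hw k x).differentiableAt

lemma Dir_Xmom (hC : ContDiff ℝ 1 h) (hh : HasCompactSupport h) (hw : w ≠ 0) (k : ℕ)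
    (ξ : ℝ × ℝ) : Dir ξ (Xmom k w h) = Xmom k w (Dir ξ h) := by
  funext x
  rw [Dir, (hasFDerivAt_Xmom hC hh hw k x).fderiv, ContinuousLinearMap.integral_apply
    ((hC.continuous_fderiv one_ne_zero).integrable_pow_smul_apply_add_smul (hh.fderiv ℝ) hw k
      x).integrableOn]
  rfl

lemma Xmom_zero_Dir_self (hC : ContDiff ℝ 1 h) (hh : HasCompactSupport h) (hw : w ≠ 0)
    (x : ℝ × ℝ) : Xmom 0 w (Dir w h) x = -h x := by
  have hd (t : ℝ) : deriv (fun t : ℝ => h (x + t • w)) t = Dir w h (x + t • w) :=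
    (hasDerivAt_apply_add_smul (hC.differentiable one_ne_zero) x t).deriv
  have hFTC := (hh.comp_add_smul hw x).integral_Ioi_deriv_eq (by fun_prop) 0
  simpa [Xmom, hd] using hFTC

lemma Xmom_succ_Dir_self (hC : ContDiff ℝ 1 h) (hh : HasCompactSupport h) (hw : w ≠ 0)
    (k : ℕ) (x : ℝ × ℝ) : Xmom (k + 1) w (Dir w h) x = -((k + 1) * Xmom k w h x) := by
  have hd (t : ℝ) : deriv (fun t : ℝ => t ^ (k + 1) * h (x + t • w)) t =
      (k + 1) * (t ^ k * h (x + t • w)) + t ^ (k + 1) * Dir w h (x + t • w) := by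
    refine HasDerivAt.deriv (((hasDerivAt_pow (k + 1) t).mul
      (hasDerivAt_apply_add_smul (hC.differentiable one_ne_zero) x t)).congr_deriv ?_)
    rw [Nat.add_sub_cancel]
    push_cast
    ring
  have hcs : HasCompactSupport fun t : ℝ => t ^ (k + 1) * h (x + t • w) :=
    (hh.comp_add_smul hw x).mul_left
  have hFTC := hcs.integral_Ioi_deriv_eq (by fun_prop) 0
  have hint : Integrable fun t : ℝ => t ^ k * h (x + t • w) :=
    hC.continuous.integrable_pow_smul_apply_add_smul hh hw k x
  have hint' : Integrable fun t : ℝ => t ^ (k + 1) * Dir w h (x + t • w) :=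
    (hC.continuous_fderiv one_ne_zero).clm_apply continuous_const
      |>.integrable_pow_smul_apply_add_smul (hh.fderiv_apply ℝ w) hw (k + 1) x
  simp only [hd] at hFTC
  rw [integral_add (hint.const_mul _).integrableOn hint'.integrableOn, integral_const_mul] at hFTC
  rw [zero_pow k.succ_ne_zero, zero_mul, neg_zero] at hFTC
  rw [Xmom, Xmom]
  linarith

lemma Dir_add {F G : ℝ × ℝ → ℝ} (hF : Differentiable ℝ F) (hG : Differentiable ℝ G)
    (ξ : ℝ × ℝ) : Dir ξ (F + G) = Dir ξ F + Dir ξ G := by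
  funext x
  simp only [Dir, fderiv_add (hF x) (hG x), add_apply, Pi.add_apply]

lemma Dir_sub {F G : ℝ × ℝ → ℝ} (hF : Differentiable ℝ F) (hG : Differentiable ℝ G)
    (ξ : ℝ × ℝ) : Dir ξ (F - G) = Dir ξ F - Dir ξ G := by
  funext x
  simp only [Dir, fderiv_sub (hF x) (hG x), sub_apply, Pi.sub_apply]

lemma ContDiff.Dir {n : WithTop ℕ∞} (hC : ContDiff ℝ (n + 1) h) (ξ : ℝ × ℝ) :
    ContDiff ℝ n (Dir ξ h) :=
  (hC.fderiv_right le_rfl).clm_apply contDiff_const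

end Beam

theorem neg_Dir_Dir_Xmom_one_add {u v : ℝ × ℝ} (hu : u ≠ 0) (hv : v ≠ 0) {a b : ℝ × ℝ → ℝ}
    (ha : ContDiff ℝ 2 a) (hb : ContDiff ℝ 2 b) (has : HasCompactSupport a)
    (hbs : HasCompactSupport b) (x : ℝ × ℝ) :
    -Dir u (Dir v (Xmom 1 u a + Xmom 1 v b)) x =
      a x + b x + (Dir u (Xmom 0 u a + Xmom 0 v b) x + Dir v (Xmom 0 u a + Xmom 0 v b) x) := by
  have ha1 : ContDiff ℝ 1 a := ha.of_le one_le_two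
  have hb1 : ContDiff ℝ 1 b := hb.of_le one_le_two
  have hva : ContDiff ℝ 1 (Dir v a) := ha.Dir v
  have hvas : HasCompactSupport (Dir v a) := has.fderiv_apply ℝ v
  have hXa (k : ℕ) := differentiable_Xmom ha1 has hu k
  have hXb (k : ℕ) := differentiable_Xmom hb1 hbs hv k
  have hDu : Dir u (Xmom 0 u a + Xmom 0 v b) x = -a x + Xmom 0 v (Dir u b) x := by
    rw [Dir_add (hXa 0) (hXb 0), Pi.add_apply, Dir_Xmom ha1 has hu, Dir_Xmom hb1 hbs hv,
      Xmom_zero_Dir_self ha1 has hu]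
  have hDv : Dir v (Xmom 0 u a + Xmom 0 v b) x = Xmom 0 u (Dir v a) x - b x := by
    rw [Dir_add (hXa 0) (hXb 0), Pi.add_apply, Dir_Xmom ha1 has hu, Dir_Xmom hb1 hbs hv,
      Xmom_zero_Dir_self hb1 hbs hv, sub_eq_add_neg]
  have hDv1 : Dir v (Xmom 1 u a + Xmom 1 v b) = Xmom 1 u (Dir v a) - Xmom 0 v b := by
    rw [Dir_add (hXa 1) (hXb 1), Dir_Xmom ha1 has hu, Dir_Xmom hb1 hbs hv]
    funext y
    simpa [sub_eq_add_neg] using Xmom_succ_Dir_self hb1 hbs hv 0 y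
  have hDuDv1 : Dir u (Dir v (Xmom 1 u a + Xmom 1 v b)) x =
      -Xmom 0 u (Dir v a) x - Xmom 0 v (Dir u b) x := by
    rw [hDv1, Dir_sub (differentiable_Xmom hva hvas hu 1) (hXb 0), Pi.sub_apply,
      Dir_Xmom hva hvas hu, Dir_Xmom hb1 hbs hv]
    simpa using Xmom_succ_Dir_self hva hvas hu 0 x
  rw [hDuDv1, hDu, hDv]
  ring

theorem first_moment_relation_general
    (u1 u2 : ℝ) (hu1 : 0 < u1)
    (f11 f12 f22 : ℝ × ℝ → ℝ)
    (h11 : ContDiff ℝ 2 f11) (h12 : ContDiff ℝ 2 f12) (h22 : ContDiff ℝ 2 f22)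
    (s11 : SuppInDisc f11) (s12 : SuppInDisc f12) (s22 : SuppInDisc f22)
    (x : ℝ × ℝ) :
    -Dir (u1, u2) (Dir (-u1, u2) (VlineLk 1 u1 u2 f11 f12 f22)) x =
      2 * (u1 ^ 2 * f11 x + u2 ^ 2 * f22 x) +
        (Dir (u1, u2) (VlineLk 0 u1 u2 f11 f12 f22) x +
          Dir (-u1, u2) (VlineLk 0 u1 u2 f11 f12 f22) x) := by
  set a : ℝ × ℝ → ℝ := fun y => u1 ^ 2 * f11 y + 2 * u1 * u2 * f12 y + u2 ^ 2 * f22 y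
  set b : ℝ × ℝ → ℝ := fun y => u1 ^ 2 * f11 y - 2 * u1 * u2 * f12 y + u2 ^ 2 * f22 y
  have hu : ((u1, u2) : ℝ × ℝ) ≠ 0 := fun h => hu1.ne' (congrArg Prod.fst h)
  have hv : ((-u1, u2) : ℝ × ℝ) ≠ 0 := fun h => hu1.ne' (neg_eq_zero.1 (congrArg Prod.fst h))
  have has : SuppInDisc a := fun y hy => by simp [a, s11 y hy, s12 y hy, s22 y hy]
  have hbs : SuppInDisc b := fun y hy => by simp [b, s11 y hy, s12 y hy, s22 y hy]
  have key := neg_Dir_Dir_Xmom_one_add hu hv (by fun_prop : ContDiff ℝ 2 a)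
    (by fun_prop : ContDiff ℝ 2 b) has.hasCompactSupport hbs.hasCompactSupport x
  have hab : a x + b x = 2 * (u1 ^ 2 * f11 x + u2 ^ 2 * f22 x) := by simp only [a, b]; ring
  rw [← hab]
  exact key

/-- relation between the first moment longitudinal V-line transform
and the longitudinal V-line transform. -/
theorem first_moment_relation
    (u1 u2 : ℝ) (hu : u1 ^ 2 + u2 ^ 2 = 1) (hu1 : 0 < u1) (hu2 : 0 < u2)
    (f11 f12 f22 : ℝ × ℝ → ℝ)
    (h11 : ContDiff ℝ 2 f11) (h12 : ContDiff ℝ 2 f12) (h22 : ContDiff ℝ 2 f22)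
    (s11 : SuppInDisc f11) (s12 : SuppInDisc f12) (s22 : SuppInDisc f22)
    (x : ℝ × ℝ) :
    -Dir (u1, u2) (Dir (-u1, u2) (VlineLk 1 u1 u2 f11 f12 f22)) x =
      2 * (u1 ^ 2 * f11 x + u2 ^ 2 * f22 x) +
        (Dir (u1, u2) (VlineLk 0 u1 u2 f11 f12 f22) x +
          Dir (-u1, u2) (VlineLk 0 u1 u2 f11 f12 f22) x) :=
  first_moment_relation_general u1 u2 hu1 f11 f12 f22 h11 h12 h22 s11 s12 s22 x
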